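/- arXiv:math-ph/0506036 — 3 statements merged into one kernel-verified Lean document; each statement's English description precedes it below -/
import Mathlib

section
/- With L_m as defined from the clock and shift matrices, the commutator satisfies [L_μ, L_ν] = (N/π) sin((π/N)(μ₁ν₂ - μ₂ν₁)) L_{μ+ν}. -/
open Matrix Complex

/-- The clock matrix `S = √ω · diag(1, ω, ω², …, ω^{N-1})` with `ω = exp(2πi/N)`,
`√ω = exp(πi/N)`. -/
noncomputable def clockS (N : ℕ) : Matrix (Fin N) (Fin N) ℂ :=
  Matrix.diagonal fun k =>
    Complex.exp (Real.pi * Complex.I / N) * Complex.exp (2 * Real.pi * Complex.I / N) ^ (k : ℕ)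

/-- The shift matrix `T` with `T_{j,j+1} = 1` (j = 1,…,N-1), `T_{N,1} = -1`,
all other entries zero. -/
def shiftT (N : ℕ) : Matrix (Fin N) (Fin N) ℂ :=
  Matrix.of fun j k =>
    if (j : ℕ) + 1 = (k : ℕ) then 1
    else if (j : ℕ) = N - 1 ∧ (k : ℕ) = 0 then -1 else 0

/-- Integer power of a square matrix (negative exponents via the nonsingular inverse). -/
noncomputable def mzpow {N : ℕ} (A : Matrix (Fin N) (Fin N) ℂ) (z : ℤ) :
    Matrix (Fin N) (Fin N) ℂ :=
  if 0 ≤ z then A ^ z.toNat else A⁻¹ ^ (-z).toNat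

/-- `L_m = (iN/2π) ω^{m₁m₂/2} S^{m₁} T^{m₂}`, where `ω^{x/2} = exp(πix/N)`. -/
noncomputable def Lmat (N : ℕ) (m : ℤ × ℤ) : Matrix (Fin N) (Fin N) ℂ :=
  (Complex.I * N / (2 * Real.pi)) •
    (Complex.exp (Real.pi * Complex.I * ((m.1 * m.2 : ℤ) : ℂ) / N) •
      (mzpow (clockS N) m.1 * mzpow (shiftT N) m.2))

/-! The clock and shift matrices satisfy the Weyl relation `T S = ω S T` with `ω` central, and in
any group such a relation integrates to `T^b S^a = ω^{ab} S^a T^b`. Hence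
`L_μ L_ν = (iN/2π) ω^{-(μ×ν)/2} L_{μ+ν}`, and subtracting the same identity with `μ, ν`
exchanged turns `ω^{-(μ×ν)/2} - ω^{(μ×ν)/2}` into `-2i sin(π(μ×ν)/N)`. -/

theorem mul_zpow_of_mul_eq_central_mul {G : Type*} [Group G] {x y z : G}
    (hz : z ∈ Subgroup.center G) (h : y * x = z * x * y) (a : ℤ) :
    y * x ^ a = z ^ a * x ^ a * y := by
  rw [← Commute.mul_zpow (Subgroup.mem_center_iff.1 hz x).symm]
  exact SemiconjBy.zpow_right h a

theorem zpow_mul_zpow_of_mul_eq_central_mul {G : Type*} [Group G] {x y z : G}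
    (hz : z ∈ Subgroup.center G) (h : y * x = z * x * y) (a b : ℤ) :
    y ^ b * x ^ a = z ^ (a * b) * x ^ a * y ^ b := by
  have hswap : x ^ a * y = z ^ (-a) * y * x ^ a := by
    rw [mul_assoc, mul_zpow_of_mul_eq_central_mul hz h a, ← mul_assoc, ← mul_assoc,
      ← _root_.zpow_add, neg_add_cancel, zpow_zero, one_mul]
  calc y ^ b * x ^ a = z ^ (a * b) * ((z ^ (-a)) ^ b * y ^ b * x ^ a) := by
        rw [← _root_.zpow_mul, ← mul_assoc, ← mul_assoc, ← _root_.zpow_add, neg_mul,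
          add_neg_cancel, zpow_zero, one_mul]
    _ = z ^ (a * b) * x ^ a * y ^ b := by
        rw [← mul_zpow_of_mul_eq_central_mul (Subgroup.zpow_mem _ hz (-a)) hswap b, mul_assoc]

theorem mzpow_eq_zpow {N : ℕ} (A : Matrix (Fin N) (Fin N) ℂ) (z : ℤ) : mzpow A z = A ^ z := by
  unfold mzpow
  split_ifs with h
  · rw [← zpow_natCast, Int.toNat_of_nonneg h]
  · rw [inv_pow', ← zpow_neg_natCast, Int.toNat_of_nonneg (by omega), neg_neg]

noncomputable def unitRoot (N : ℕ) : ℂ := Complex.exp (2 * Real.pi * Complex.I / N)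

theorem unitRoot_pow_self {N : ℕ} (hN : 0 < N) : unitRoot N ^ N = 1 :=
  (Complex.isPrimitiveRoot_exp N hN.ne').pow_eq_one

theorem unitRoot_zpow (N : ℕ) (k : ℤ) :
    unitRoot N ^ k = Complex.exp (Real.pi * Complex.I * (2 * k) / N) := by
  rw [unitRoot, ← Complex.exp_int_mul]
  ring_nf

theorem isUnit_clockS (N : ℕ) : IsUnit (clockS N) := by
  rw [isUnit_iff_isUnit_det, clockS, det_diagonal, isUnit_iff_ne_zero]
  exact Finset.prod_ne_zero_iff.2 fun k _ =>
    mul_ne_zero (Complex.exp_ne_zero _) (pow_ne_zero _ (Complex.exp_ne_zero _))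

theorem shiftT_eq_diagonal_mul_permMatrix (N : ℕ) :
    shiftT N = diagonal (fun j : Fin N => if (j : ℕ) + 1 = N then (-1 : ℂ) else 1) *
      (finRotate N).permMatrix ℂ := by
  cases N with
  | zero => exact Subsingleton.elim _ _
  | succ n =>
    ext j k
    simp only [shiftT, diagonal_mul, of_apply, PEquiv.toMatrix_apply, Equiv.toPEquiv_apply,
      Option.mem_def, Option.some.injEq, Fin.ext_iff, coe_finRotate, Fin.val_last]
    split_ifs <;> first | omega | norm_num

theorem isUnit_shiftT (N : ℕ) : IsUnit (shiftT N) := by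
  rw [isUnit_iff_isUnit_det, shiftT_eq_diagonal_mul_permMatrix, det_mul, det_diagonal,
    det_permutation]
  refine IsUnit.mul ?_ ((Equiv.Perm.sign _).isUnit.map (Int.castRingHom ℂ))
  exact isUnit_iff_ne_zero.2 (Finset.prod_ne_zero_iff.2 fun j _ => by split_ifs <;> norm_num)

theorem shiftT_mul_clockS {N : ℕ} (hN : 0 < N) :
    shiftT N * clockS N = unitRoot N • (clockS N * shiftT N) := by
  have hS : clockS N = diagonal fun k : Fin N =>
      Complex.exp (Real.pi * Complex.I / N) * unitRoot N ^ (k : ℕ) := rfl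
  ext j k
  rw [hS, mul_diagonal, Matrix.smul_apply, diagonal_mul, smul_eq_mul]
  simp only [shiftT, of_apply]
  split_ifs with hjk hwrap
  · rw [← hjk, pow_succ]; ring
  · obtain ⟨hj, hk⟩ := hwrap
    have hwN : unitRoot N * unitRoot N ^ (j : ℕ) = 1 := by
      rw [← pow_succ', hj, Nat.sub_add_cancel hN, unitRoot_pow_self hN]
    rw [hk, pow_zero]
    linear_combination (Complex.exp (Real.pi * Complex.I / N)) * hwN
  · ring

theorem shiftT_zpow_mul_clockS_zpow {N : ℕ} (hN : 0 < N) (a b : ℤ) :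
    shiftT N ^ b * clockS N ^ a = unitRoot N ^ (a * b) • (clockS N ^ a * shiftT N ^ b) := by
  let ω : ℂˣ := Units.mk0 (unitRoot N) (Complex.exp_ne_zero _)
  have hcoe : ∀ k : ℤ, ((GeneralLinearGroup.scalar (Fin N) ω ^ k : GL (Fin N) ℂ) :
      Matrix (Fin N) (Fin N) ℂ) = diagonal fun _ => unitRoot N ^ k := fun k => by
    rw [← map_zpow, GeneralLinearGroup.coe_scalar, Units.val_zpow_eq_zpow_val, scalar_apply]
    rfl
  have hz : GeneralLinearGroup.scalar (Fin N) ω ∈ Subgroup.center (GL (Fin N) ℂ) := by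
    rw [GeneralLinearGroup.center_eq_range_scalar]
    exact ⟨ω, rfl⟩
  have hTS : (isUnit_shiftT N).unit * (isUnit_clockS N).unit =
      GeneralLinearGroup.scalar (Fin N) ω * (isUnit_clockS N).unit * (isUnit_shiftT N).unit := by
    ext : 1
    simp only [Units.val_mul, IsUnit.unit_spec, GeneralLinearGroup.coe_scalar, scalar_apply, ω,
      ← smul_eq_diagonal_mul, Matrix.smul_mul]
    exact shiftT_mul_clockS hN
  have := congrArg Units.val (zpow_mul_zpow_of_mul_eq_central_mul hz hTS a b)
  simpa [coe_units_zpow, hcoe, smul_eq_diagonal_mul, Matrix.mul_assoc] using this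

theorem clockS_shiftT_mul_clockS_shiftT {N : ℕ} (hN : 0 < N) (μ ν : ℤ × ℤ) :
    clockS N ^ μ.1 * shiftT N ^ μ.2 * (clockS N ^ ν.1 * shiftT N ^ ν.2) =
      unitRoot N ^ (ν.1 * μ.2) • (clockS N ^ (μ + ν).1 * shiftT N ^ (μ + ν).2) := by
  have hS := (isUnit_iff_isUnit_det _).1 (isUnit_clockS N)
  have hT := (isUnit_iff_isUnit_det _).1 (isUnit_shiftT N)
  calc clockS N ^ μ.1 * shiftT N ^ μ.2 * (clockS N ^ ν.1 * shiftT N ^ ν.2)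
      = clockS N ^ μ.1 * (shiftT N ^ μ.2 * clockS N ^ ν.1) * shiftT N ^ ν.2 := by
        simp only [Matrix.mul_assoc]
    _ = unitRoot N ^ (ν.1 * μ.2) •
          (clockS N ^ μ.1 * clockS N ^ ν.1 * (shiftT N ^ μ.2 * shiftT N ^ ν.2)) := by
        rw [shiftT_zpow_mul_clockS_zpow hN]
        simp only [Matrix.mul_smul, Matrix.smul_mul, Matrix.mul_assoc]
    _ = _ := by rw [← Matrix.zpow_add hS, ← Matrix.zpow_add hT, Prod.fst_add, Prod.snd_add]

def cross (μ ν : ℤ × ℤ) : ℤ := μ.1 * ν.2 - μ.2 * ν.1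

theorem cross_swap (μ ν : ℤ × ℤ) : cross ν μ = -cross μ ν := by
  rw [cross, cross]; ring

theorem Lmat_mul {N : ℕ} (hN : 0 < N) (μ ν : ℤ × ℤ) :
    Lmat N μ * Lmat N ν =
      (Complex.I * N / (2 * Real.pi) *
        Complex.exp (-(Real.pi / N * (cross μ ν : ℂ)) * Complex.I)) • Lmat N (μ + ν) := by
  have hphase :
      Complex.exp (Real.pi * Complex.I * ((μ.1 * μ.2 : ℤ) : ℂ) / N) *
        Complex.exp (Real.pi * Complex.I * ((ν.1 * ν.2 : ℤ) : ℂ) / N) *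
        unitRoot N ^ (ν.1 * μ.2) =
      Complex.exp (-(Real.pi / N * (cross μ ν : ℂ)) * Complex.I) *
        Complex.exp (Real.pi * Complex.I * (((μ + ν).1 * (μ + ν).2 : ℤ) : ℂ) / N) := by
    rw [unitRoot_zpow, ← Complex.exp_add, ← Complex.exp_add, ← Complex.exp_add, cross]
    congr 1
    push_cast [Prod.fst_add, Prod.snd_add]
    ring
  simp only [Lmat, mzpow_eq_zpow, Matrix.smul_mul, Matrix.mul_smul, smul_smul]
  rw [clockS_shiftT_mul_clockS_shiftT hN, smul_smul]
  congr 1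
  linear_combination (Complex.I * N / (2 * Real.pi)) ^ 2 * hphase

/-- `[L_μ, L_ν] = (N/π) sin((π/N)(μ₁ν₂ - μ₂ν₁)) L_{μ+ν}`. -/
theorem Lmat_commutator (N : ℕ) (hN : 2 ≤ N) (μ ν : ℤ × ℤ) :
    Lmat N μ * Lmat N ν - Lmat N ν * Lmat N μ =
      (((N : ℂ) / (Real.pi : ℂ)) *
        Complex.sin ((Real.pi : ℂ) / N * ((μ.1 * ν.2 - μ.2 * ν.1 : ℤ) : ℂ))) •
        Lmat N (μ + ν) := by
  rw [Lmat_mul (by omega), Lmat_mul (by omega), add_comm ν μ, ← sub_smul, cross_swap μ ν]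
  congr 1
  change _ = _ * Complex.sin (Real.pi / N * (cross μ ν : ℂ))
  have hπ : (Real.pi : ℂ) ≠ 0 := Complex.ofReal_ne_zero.2 Real.pi_ne_zero
  rw [Complex.sin, Int.cast_neg, mul_neg, neg_neg]
  field_simp
end

section
/- With L_m as defined from the clock and shift matrices, Tr(L_{Nr}) = (-1)^{r₁ + r₂ + N r₁ r₂} · iN²/(2π) for all r ∈ ℤ×ℤ. -/
open Matrix Complex

/-!
`S^N = -1` because `S` is `exp(πi/N)` times a diagonal of `N`-th roots of unity. `T^N = -1`
because `T` is the negacyclic shift: if the rows of a matrix `M` are extended to all `n : ℕ` by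
`row (n + N) = - row n`, then row `n` of `T * M` is row `n + 1` of `M`, so row `n` of `T^N * M`
is row `n + N`, i.e. minus row `n`, of `M`. Hence `S^{N r₁} = (-1)^{r₁}`,
`T^{N r₂} = (-1)^{r₂}`, and the phase `ω^{N r₁ · N r₂ / 2}` is `(-1)^{N r₁ r₂}`;
the trace of the identity contributes the factor `N`.
-/

section NegacyclicRow

variable {R α : Type*} [Ring R] {N : ℕ} [NeZero N]

def negacyclicRow (M : Matrix (Fin N) α R) (n : ℕ) : α → R :=
  (-1 : R) ^ (n / N) • M (Fin.ofNat N n)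

theorem negacyclicRow_add_mul (M : Matrix (Fin N) α R) (a q : ℕ) :
    negacyclicRow M (a + N * q) = (-1 : R) ^ q • negacyclicRow M a := by
  have hrow : Fin.ofNat N (a + N * q) = Fin.ofNat N a := Fin.ext (by simp)
  rw [negacyclicRow, negacyclicRow, Nat.add_mul_div_left _ _ (Nat.pos_of_neZero N), add_comm,
    pow_add, mul_smul, hrow]

theorem negacyclicRow_val (M : Matrix (Fin N) α R) (i : Fin N) : negacyclicRow M i = M i := by
  simp [negacyclicRow, Nat.div_eq_of_lt i.isLt]

theorem negacyclicRow_mul (A : Matrix (Fin N) (Fin N) R) (B : Matrix (Fin N) α R) (n : ℕ) :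
    negacyclicRow (A * B) n = negacyclicRow A n ᵥ* B := by
  rw [negacyclicRow, negacyclicRow, smul_vecMul, Matrix.mul_apply_eq_vecMul]

end NegacyclicRow

section ShiftT

variable {N : ℕ} [NeZero N]

theorem shiftT_eq_negacyclicRow_one (i : Fin N) :
    shiftT N i = negacyclicRow (1 : Matrix (Fin N) (Fin N) ℂ) (i + 1) := by
  ext l
  have hl := l.isLt
  simp only [shiftT, Matrix.of_apply, negacyclicRow, Pi.smul_apply, Matrix.one_apply, smul_eq_mul,
    Fin.ext_iff, Fin.val_ofNat]
  rcases Nat.lt_or_ge ((i : ℕ) + 1) N with h | h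
  · rw [Nat.div_eq_of_lt h, Nat.mod_eq_of_lt h]
    split_ifs <;> first | omega | simp
  · have hi : (i : ℕ) + 1 = N := by omega
    rw [hi, Nat.div_self (Nat.pos_of_neZero N), Nat.mod_self]
    split_ifs <;> first | omega | simp

variable {α : Type*}

theorem negacyclicRow_shiftT_mul (M : Matrix (Fin N) α ℂ) (n : ℕ) :
    negacyclicRow (shiftT N * M) n = negacyclicRow M (n + 1) := by
  calc negacyclicRow (shiftT N * M) n
      = (-1 : ℂ) ^ (n / N) • negacyclicRow ((1 : Matrix (Fin N) (Fin N) ℂ) * M) (n % N + 1) := by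
        rw [negacyclicRow, Matrix.mul_apply_eq_vecMul, shiftT_eq_negacyclicRow_one,
          negacyclicRow_mul, Fin.val_ofNat]
    _ = negacyclicRow M (n + 1) := by
        rw [Matrix.one_mul, ← negacyclicRow_add_mul]
        congr 1
        have := Nat.mod_add_div n N
        omega

theorem negacyclicRow_shiftT_pow_mul (M : Matrix (Fin N) α ℂ) (k n : ℕ) :
    negacyclicRow (shiftT N ^ k * M) n = negacyclicRow M (n + k) := by
  induction k generalizing n with
  | zero => rw [pow_zero, Matrix.one_mul, add_zero]
  | succ k ih =>
    rw [pow_succ', Matrix.mul_assoc, negacyclicRow_shiftT_mul, ih, add_right_comm, add_assoc]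

theorem shiftT_pow_card : shiftT N ^ N = -1 := by
  funext i
  have h := negacyclicRow_shiftT_pow_mul (1 : Matrix (Fin N) (Fin N) ℂ) N i
  rw [Matrix.mul_one, show (i : ℕ) + N = i + N * 1 by ring, negacyclicRow_add_mul,
    negacyclicRow_val, negacyclicRow_val, pow_one, neg_one_smul] at h
  exact h

end ShiftT

theorem clockS_pow_card (N : ℕ) [NeZero N] : clockS N ^ N = -1 := by
  have hζ : Complex.exp (Real.pi * Complex.I / N) ^ N = -1 := by
    rw [← Complex.exp_nat_mul, mul_div_cancel₀ _ (NeZero.ne _), Complex.exp_pi_mul_I]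
  have hω := (Complex.isPrimitiveRoot_exp N (NeZero.ne N)).pow_eq_one
  rw [clockS, Matrix.diagonal_pow, ← Matrix.diagonal_one, Matrix.diagonal_neg]
  congr 1
  funext k
  rw [Pi.pow_apply, mul_pow, hζ, ← pow_mul, mul_comm (k : ℕ) N, pow_mul, hω, one_pow, mul_one]

section ZPow

variable {n : Type*} [Fintype n] [DecidableEq n]

theorem Matrix.zpow_natCast_mul_of_pow_eq_neg_one {R : Type*} [CommRing R] {A : Matrix n n R}
    {k : ℕ} (hk : k ≠ 0) (hA : A ^ k = -1) (r : ℤ) : A ^ ((k : ℤ) * r) = (-1) ^ r := by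
  have hdet : IsUnit A.det :=
    A.isUnit_iff_isUnit_det.mp ((isUnit_pow_iff hk).mp (hA ▸ isUnit_one.neg))
  rw [Matrix.zpow_mul A hdet, zpow_natCast, hA]

theorem Matrix.neg_one_zpow {K : Type*} [Field K] (r : ℤ) :
    (-1 : Matrix n n K) ^ r = (-1 : K) ^ r • 1 := by
  have h := Matrix.coe_units_zpow (-1 : (Matrix n n K)ˣ) r
  rw [Units.val_neg, Units.val_one] at h
  rw [← h, neg_one_zpow_eq_ite, neg_one_zpow_eq_ite]
  split_ifs <;> simp

end ZPow

/-- `Tr(L_{Nr}) = (-1)^{r₁ + r₂ + N r₁ r₂} · iN²/(2π)`. -/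
theorem Lmat_trace_at_Nr (N : ℕ) (hN : 2 ≤ N) (r : ℤ × ℤ) :
    Matrix.trace (Lmat N ((N : ℤ) * r.1, (N : ℤ) * r.2)) =
      ((-1 : ℂ) ^ (r.1 + r.2 + (N : ℤ) * r.1 * r.2)) *
        (Complex.I * (N : ℂ) ^ 2 / (2 * Real.pi)) := by
  have : NeZero N := ⟨by omega⟩
  have hphase :
      Complex.exp (Real.pi * Complex.I * (((N : ℤ) * r.1 * ((N : ℤ) * r.2) : ℤ) : ℂ) / N) =
        (-1 : ℂ) ^ ((N : ℤ) * r.1 * r.2) := by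
    rw [← Complex.exp_pi_mul_I, ← Complex.exp_int_mul]
    congr 1
    push_cast
    field_simp
  rw [Lmat, mzpow_eq_zpow, mzpow_eq_zpow,
    Matrix.zpow_natCast_mul_of_pow_eq_neg_one (NeZero.ne N) (clockS_pow_card N),
    Matrix.zpow_natCast_mul_of_pow_eq_neg_one (NeZero.ne N) shiftT_pow_card,
    Matrix.neg_one_zpow, Matrix.neg_one_zpow, smul_mul_smul_comm, Matrix.one_mul, hphase,
    Matrix.trace_smul, Matrix.trace_smul, Matrix.trace_smul, Matrix.trace_one, Fintype.card_fin,
    zpow_add₀ (by norm_num), zpow_add₀ (by norm_num)]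
  simp only [smul_eq_mul]
  ring
end

section
/- If θ(w,z,p,q) = (π/2)cos(p+q) - w sin q - ∫₀^z sin(ζ cos q + p) dζ, then under the substitution u = sin q, v = sin(z cos q + p), the associated heavenly metric ds² = -cos q dw dq + cos(z cos q + p)(z sin q dq - dp)dz - (1/(cos q cos(z cos q + p)))[cos²q dq² + cos²(z cos q + p)(z sin q dq - dp)²] transforms into the pp-wave form ds² = -dw du + dv dz - (1/√((1-u²)(1-v²)))(du² + dv²). -/
/-!
Since `1 - sin² = cos²`, the factor `√((1-u²)(1-v²))` is `cos q · cos(z cos q + p)` when both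
cosines are positive. With `X = z sin q dq - dp` one has `dv = cos(z cos q + p)(cos q dz - X)`, and
in `dv dz - dv² / (cos q cos(z cos q + p))` the `dz²` terms cancel and the `X dz` terms combine,
leaving `cos(z cos q + p)(X dz - X² / cos q)`, which is the `X`-part of the heavenly metric.
-/

open Real

lemma sqrt_one_sub_sin_sq_mul_one_sub_sin_sq {a b : ℝ} (h : 0 ≤ cos a * cos b) :
    √((1 - sin a ^ 2) * (1 - sin b ^ 2)) = cos a * cos b := by
  rw [← cos_sq', ← cos_sq', ← mul_pow, sqrt_sq h]

lemma heavenly_form_eq_pp_wave_form {a b : ℝ} (ha : a ≠ 0) (hb : b ≠ 0) (dw dq dz X : ℝ) :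
    -a * dw * dq + b * X * dz - 1 / (a * b) * (a ^ 2 * dq ^ 2 + b ^ 2 * X ^ 2) =
      -dw * (a * dq) + b * (a * dz - X) * dz -
        1 / (a * b) * ((a * dq) ^ 2 + (b * (a * dz - X)) ^ 2) := by
  field_simp
  ring

theorem heavenly_metric_to_pp_wave_general (z q p dw dz dq dp u v du dv : ℝ)
    (hq : Real.cos q > 0) (hv : Real.cos (z * Real.cos q + p) > 0)
    (hu : u = Real.sin q) (hvv : v = Real.sin (z * Real.cos q + p))
    (hdu : du = Real.cos q * dq)
    (hdv : dv = Real.cos (z * Real.cos q + p) *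
      (Real.cos q * dz - z * Real.sin q * dq + dp)) :
    -Real.cos q * dw * dq +
        Real.cos (z * Real.cos q + p) * (z * Real.sin q * dq - dp) * dz -
        (1 / (Real.cos q * Real.cos (z * Real.cos q + p))) *
          (Real.cos q ^ 2 * dq ^ 2 +
            Real.cos (z * Real.cos q + p) ^ 2 * (z * Real.sin q * dq - dp) ^ 2) =
      -dw * du + dv * dz -
        (1 / Real.sqrt ((1 - u ^ 2) * (1 - v ^ 2))) * (du ^ 2 + dv ^ 2) := by
  rw [hu, hvv, sqrt_one_sub_sin_sq_mul_one_sub_sin_sq (mul_pos hq hv).le, hdu, hdv]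
  linear_combination heavenly_form_eq_pp_wave_form hq.ne' hv.ne' dw dq dz (z * sin q * dq - dp)

/-- Under `u = sin q`, `v = sin(z cos q + p)` (with `du = cos q dq`,
`dv = cos(z cos q + p)(cos q dz - z sin q dq + dp)`), the heavenly metric
`ds² = -cos q dw dq + cos(z cos q + p)(z sin q dq - dp)dz
  - (1/(cos q cos(z cos q + p)))[cos²q dq² + cos²(z cos q + p)(z sin q dq - dp)²]`
takes the pp-wave form
`ds² = -dw du + dv dz - (1/√((1-u²)(1-v²)))(du² + dv²)`. -/
theorem heavenly_metric_to_pp_wave (w z q p dw dz dq dp u v du dv : ℝ)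
    (hq : Real.cos q > 0) (hv : Real.cos (z * Real.cos q + p) > 0)
    (hu : u = Real.sin q) (hvv : v = Real.sin (z * Real.cos q + p))
    (hdu : du = Real.cos q * dq)
    (hdv : dv = Real.cos (z * Real.cos q + p) *
      (Real.cos q * dz - z * Real.sin q * dq + dp)) :
    -Real.cos q * dw * dq +
        Real.cos (z * Real.cos q + p) * (z * Real.sin q * dq - dp) * dz -
        (1 / (Real.cos q * Real.cos (z * Real.cos q + p))) *
          (Real.cos q ^ 2 * dq ^ 2 +
            Real.cos (z * Real.cos q + p) ^ 2 * (z * Real.sin q * dq - dp) ^ 2) =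
      -dw * du + dv * dz -
        (1 / Real.sqrt ((1 - u ^ 2) * (1 - v ^ 2))) * (du ^ 2 + dv ^ 2) :=
  heavenly_metric_to_pp_wave_general z q p dw dz dq dp u v du dv hq hv hu hvv hdu hdv
end
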